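/- Let N ≥ 1 be an integer and α ∈ ℝ. For X ≥ 1, define B_α(X) = Σ_{1 ≤ c ≤ X, c = c₁c₂, c₁ | N^∞, gcd(c₂,N)=1} e(cα) c₁ φ(c₂), i.e. the sum of e(cα)·c₁·φ(c₂) over 1 ≤ c ≤ X, where c = c₁c₂ is the unique factorization with c₁ dividing a power of N and gcd(c₂, N) = 1. Then B_α(X) ≪ X² Σ_{1 ≤ j ≤ X} min(1/j², 1/(X j ⟨jα⟩)). -/

import Mathlib

open Real

/-- Distance from `x` to the nearest integer. -/
noncomputable def nint (x : ℝ) : ℝ := |x - (round x : ℤ)|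

/-- `min(1/j², 1/(X j ⟨jb⟩))`, interpreted as `1/j²` when `⟨jb⟩ = 0`. -/
noncomputable def mfun (X b : ℝ) (j : ℕ) : ℝ :=
  if nint ((j : ℝ) * b) = 0 then 1 / (j : ℝ) ^ 2
  else min (1 / (j : ℝ) ^ 2) (1 / (X * (j : ℝ) * nint ((j : ℝ) * b)))

/-- The `N`-part `c₁` of `c`: the largest divisor of `c` all of whose prime factors divide
`N` (so `c₁ ∣ N^∞`), realized as `gcd(c, N^c)`. -/
def Npart (N c : ℕ) : ℕ := Nat.gcd c (N ^ c)

/-- `B_α(X) = Σ_{1 ≤ c ≤ X} e(cα)·c₁·φ(c₂)`, where `c = c₁c₂` is the unique factorization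
with `c₁ ∣ N^∞` and `gcd(c₂, N) = 1`. -/
noncomputable def Bsum (N : ℕ) (α X : ℝ) : ℂ :=
  ∑ c ∈ Finset.Icc 1 ⌊X⌋₊,
    Complex.exp (2 * (Real.pi : ℂ) * Complex.I * (((c : ℝ) * α : ℝ) : ℂ)) *
      (Npart N c : ℂ) * (Nat.totient (c / Npart N c) : ℂ)

open Finset

noncomputable def Efn (x : ℝ) : ℂ := Complex.exp (2 * (Real.pi : ℂ) * Complex.I * (x : ℂ))

-- basic nint facts
lemma nint_nonneg (x : ℝ) : 0 ≤ nint x := abs_nonneg _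

lemma nint_le_half (x : ℝ) : nint x ≤ 1 / 2 := abs_sub_round x

-- |E θ - 1| = 2 |sin (π θ)|
lemma abs_Efn_sub_one (θ : ℝ) :
    ‖Efn θ - 1‖ = 2 * |Real.sin (π * θ)| := by
  have key : Efn θ - 1
      = Complex.exp ((π * θ : ℝ) * Complex.I) * (2 * Complex.I * Complex.sin ((π * θ : ℝ))) := by
    have hsin : (2 : ℂ) * Complex.I * Complex.sin ((π * θ : ℝ))
        = Complex.exp ((π * θ : ℝ) * Complex.I) - Complex.exp (-((π * θ : ℝ)) * Complex.I) := by
      rw [Complex.sin]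
      ring_nf
      rw [Complex.I_sq]
      ring
    rw [hsin, mul_sub, ← Complex.exp_add, ← Complex.exp_add]
    have h1 : ((π * θ : ℝ) : ℂ) * Complex.I + ((π * θ : ℝ) : ℂ) * Complex.I
        = 2 * (π : ℂ) * Complex.I * (θ : ℂ) := by push_cast; ring
    have h2 : ((π * θ : ℝ) : ℂ) * Complex.I + -((π * θ : ℝ) : ℂ) * Complex.I = 0 := by ring
    rw [h1, h2, Complex.exp_zero]
    rfl
  rw [key, norm_mul]
  rw [Complex.norm_exp_ofReal_mul_I]
  have : Complex.sin ((π * θ : ℝ)) = ((Real.sin (π * θ) : ℝ) : ℂ) := by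
    rw [Complex.ofReal_sin]
  rw [this, norm_mul, norm_mul, Complex.norm_I, Complex.norm_real]
  simp

lemma sin_pi_lower {x : ℝ} (h0 : 0 ≤ x) (h2 : x ≤ 1 / 2) : 2 * x ≤ Real.sin (π * x) := by
  have hπ : (0:ℝ) < π := Real.pi_pos
  have h1 : 0 ≤ π * x := by positivity
  have h3 : π * x ≤ π / 2 := by nlinarith
  have := Real.mul_le_sin h1 h3
  have hne : π ≠ 0 := ne_of_gt hπ
  calc 2 * x = 2 / π * (π * x) := by field_simp
    _ ≤ Real.sin (π * x) := this

lemma nint_le_abs_sin (θ : ℝ) : 2 * nint θ ≤ |Real.sin (π * θ)| := by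
  set r : ℤ := round θ with hr
  have hθ : θ = (θ - r) + r * 1 := by ring
  have hsin : Real.sin (π * θ) = (-1) ^ r * Real.sin (π * (θ - r)) := by
    have : π * θ = π * (θ - r) + r * π := by ring
    rw [this, Real.sin_add_int_mul_pi]
  have habs : |Real.sin (π * θ)| = |Real.sin (π * (θ - r))| := by
    rw [hsin, abs_mul]
    have : |((-1 : ℝ)) ^ r| = 1 := by
      rcases Int.even_or_odd r with he | ho
      · rw [he.neg_one_zpow]; norm_num
      · rw [Odd.neg_one_zpow ho]; norm_num
    rw [this, one_mul]
  rw [habs]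
  set δ : ℝ := θ - r with hδ
  have hhalf : |δ| ≤ 1 / 2 := abs_sub_round θ
  have key : 2 * |δ| ≤ Real.sin (π * |δ|) := sin_pi_lower (abs_nonneg _) hhalf
  have : Real.sin (π * |δ|) ≤ |Real.sin (π * δ)| := by
    rcases abs_cases δ with ⟨h1, _⟩ | ⟨h1, _⟩
    · rw [h1]; exact le_abs_self _
    · rw [h1]
      have : Real.sin (π * -δ) = -Real.sin (π * δ) := by
        rw [mul_neg, Real.sin_neg]
      rw [this]
      exact neg_le_abs _
  have : 2 * |δ| ≤ |Real.sin (π * δ)| := le_trans key this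
  exact this

lemma Efn_sub_one_lower {θ : ℝ} (h : nint θ ≠ 0) : 4 * nint θ ≤ ‖Efn θ - 1‖ := by
  rw [abs_Efn_sub_one]
  have := nint_le_abs_sin θ
  linarith

lemma nint_pos {θ : ℝ} (h : nint θ ≠ 0) : 0 < nint θ :=
  lt_of_le_of_ne (nint_nonneg θ) (Ne.symm h)

lemma Efn_pow (θ : ℝ) (k : ℕ) : Efn θ ^ k = Efn (k * θ) := by
  rw [Efn, Efn, ← Complex.exp_nat_mul]
  congr 1
  push_cast
  ring

lemma abs_Efn (θ : ℝ) : ‖Efn θ‖ = 1 := by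
  rw [Efn]
  have : 2 * (π : ℂ) * Complex.I * (θ : ℂ) = ((2 * π * θ : ℝ) : ℂ) * Complex.I := by
    push_cast; ring
  rw [this, Complex.norm_exp_ofReal_mul_I]

-- geometric sum bound over Icc a b
lemma geom_Icc_bound {z : ℂ} (hz : ‖z‖ = 1) (hz1 : z ≠ 1) (a b : ℕ) :
    ‖∑ k ∈ Icc a b, z ^ k‖ ≤ 2 / ‖z - 1‖ := by
  have hzne : ‖z - 1‖ ≠ 0 := by
    simpa [sub_eq_zero] using hz1
  have hpos : 0 < ‖z - 1‖ := lt_of_le_of_ne (by positivity) (Ne.symm hzne)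
  rcases le_or_gt a b with hab | hab
  · have : ∑ k ∈ Icc a b, z ^ k = z ^ a * ∑ k ∈ range (b + 1 - a), z ^ k := by
      rw [← Finset.Ico_add_one_right_eq_Icc, Finset.sum_Ico_eq_sum_range, Finset.mul_sum]
      exact Finset.sum_congr rfl fun k _ => by rw [pow_add]
    rw [this, geom_sum_eq hz1, norm_mul, norm_pow, hz, one_pow, one_mul, norm_div]
    gcongr
    calc ‖z ^ (b + 1 - a) - 1‖ ≤ ‖z ^ (b + 1 - a)‖ + 1 := by
          simpa using norm_sub_le (z ^ (b + 1 - a)) 1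
      _ = 2 := by rw [norm_pow, hz, one_pow]; norm_num
  · rw [Finset.Icc_eq_empty (by omega)]
    simp
    positivity

-- |Σ_{k ∈ Icc a b} Efn(kθ)| ≤ 1/(2⟨θ⟩)
lemma exp_sum_Icc_bound {θ : ℝ} (h : nint θ ≠ 0) (a b : ℕ) :
    ‖∑ k ∈ Icc a b, Efn (k * θ)‖ ≤ 1 / (2 * nint θ) := by
  have hpos := nint_pos h
  have hlow := Efn_sub_one_lower h
  have hz1 : Efn θ ≠ 1 := by
    intro hcon
    rw [hcon] at hlow
    simp at hlow
    linarith
  have hsum : ∑ k ∈ Icc a b, Efn (k * θ) = ∑ k ∈ Icc a b, Efn θ ^ k :=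
    Finset.sum_congr rfl fun k _ => (Efn_pow θ k).symm
  rw [hsum]
  have := geom_Icc_bound (abs_Efn θ) hz1 a b
  have habs : (0:ℝ) < ‖Efn θ - 1‖ := by linarith
  calc ‖∑ k ∈ Icc a b, Efn θ ^ k‖ ≤ 2 / ‖Efn θ - 1‖ := this
    _ ≤ 2 / (4 * nint θ) := by
        rw [div_le_div_iff₀ habs (by positivity)]; nlinarith
    _ = 1 / (2 * nint θ) := by rw [div_eq_div_iff (by positivity) (by positivity)]; ring

-- weighted sum, Abel-type bound
lemma weighted_exp_sum_bound {θ : ℝ} (h : nint θ ≠ 0) (n : ℕ) :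
    ‖∑ k ∈ Icc 1 n, (k : ℂ) * Efn (k * θ)‖ ≤ n / nint θ := by
  have hpos := nint_pos h
  have hswap : ∑ k ∈ Icc 1 n, (k : ℂ) * Efn (k * θ)
      = ∑ i ∈ Icc 1 n, ∑ k ∈ Icc i n, Efn (k * θ) := by
    have h1 : ∀ k ∈ Icc 1 n, (k : ℂ) * Efn (k * θ) = ∑ _i ∈ Icc 1 k, Efn (k * θ) := by
      intro k _
      rw [Finset.sum_const, Nat.card_Icc]
      simp
    rw [Finset.sum_congr rfl h1]
    exact Finset.sum_comm' (by intro x y; simp only [Finset.mem_Icc]; omega)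
  rw [hswap]
  calc ‖∑ i ∈ Icc 1 n, ∑ k ∈ Icc i n, Efn (k * θ)‖
      ≤ ∑ i ∈ Icc 1 n, ‖∑ k ∈ Icc i n, Efn (k * θ)‖ := by
        exact norm_sum_le _ _
    _ ≤ ∑ i ∈ Icc 1 n, 1 / (2 * nint θ) := by
        exact Finset.sum_le_sum fun i _ => exp_sum_Icc_bound h i n
    _ = n * (1 / (2 * nint θ)) := by rw [Finset.sum_const, Nat.card_Icc]; simp
    _ ≤ n / nint θ := by
        rw [mul_one_div, div_le_div_iff₀ (by positivity) hpos]
        nlinarith [Nat.cast_nonneg (α := ℝ) n]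

lemma weighted_exp_sum_trivial (θ : ℝ) (n : ℕ) :
    ‖∑ k ∈ Icc 1 n, (k : ℂ) * Efn (k * θ)‖ ≤ (n : ℝ) ^ 2 := by
  calc ‖∑ k ∈ Icc 1 n, (k : ℂ) * Efn (k * θ)‖
      ≤ ∑ k ∈ Icc 1 n, ‖(k : ℂ) * Efn (k * θ)‖ := norm_sum_le _ _
    _ = ∑ k ∈ Icc 1 n, (k : ℝ) := by
        refine Finset.sum_congr rfl fun k _ => ?_
        rw [norm_mul, abs_Efn, mul_one, Complex.norm_natCast]
    _ ≤ ∑ _k ∈ Icc 1 n, (n : ℝ) := by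
        refine Finset.sum_le_sum fun k hk => ?_
        exact_mod_cast Nat.cast_le.mpr (Finset.mem_Icc.mp hk).2
    _ = (n : ℝ) * n := by rw [Finset.sum_const, Nat.card_Icc]; simp
    _ = (n : ℝ) ^ 2 := by ring

open ArithmeticFunction ArithmeticFunction.Moebius in
lemma phi_moebius (n : ℕ) (hn : 0 < n) :
    (Nat.totient n : ℤ) = ∑ m ∈ n.divisors, μ m * ((n / m : ℕ) : ℤ) := by
  have H := (sum_eq_iff_sum_mul_moebius_eq (R := ℤ)
      (f := fun i => (Nat.totient i : ℤ)) (g := fun i => (i : ℤ))).mp ?_ n hn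
  · rw [← H, ← Nat.sum_divisorsAntidiagonal (f := fun x y => (μ x : ℤ) * (y : ℤ))]
    norm_cast
  · intro n hn
    exact_mod_cast congrArg (Nat.cast : ℕ → ℤ) (Nat.sum_totient n)




lemma Npart_dvd (N c : ℕ) : Npart N c ∣ c := Nat.gcd_dvd_left _ _

lemma Npart_pos {N c : ℕ} (hc : 0 < c) : 0 < Npart N c :=
  Nat.pos_of_ne_zero fun h => by
    have := Nat.eq_zero_of_gcd_eq_zero_left h
    omega

lemma copart_coprime {N c : ℕ} (hN : 1 ≤ N) (hc : 0 < c) :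
    Nat.Coprime (c / Npart N c) N := by
  have hc0 : c ≠ 0 := hc.ne'
  have hN0 : N ≠ 0 := by omega
  have hNc0 : N ^ c ≠ 0 := pow_ne_zero _ hN0
  by_contra hcon
  obtain ⟨p, hp, hpd, hpN⟩ := Nat.Prime.not_coprime_iff_dvd.mp hcon
  have hdvd := Npart_dvd N c
  have hc2 : c / Npart N c ≠ 0 := by
    have := Nat.div_pos (Nat.le_of_dvd hc hdvd) (Npart_pos hc)
    omega
  -- factorization of Npart at p equals that of c at p
  have hfg : (Npart N c).factorization = c.factorization ⊓ (N ^ c).factorization :=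
    Nat.factorization_gcd hc0 hNc0
  have hNp : 0 < N.factorization p := hp.factorization_pos_of_dvd hN0 hpN
  have hlt : c.factorization p < c := Nat.factorization_lt p hc0
  have h1 : (Npart N c).factorization p = c.factorization p := by
    rw [hfg]
    simp only [Finsupp.inf_apply, Nat.factorization_pow, Finsupp.smul_apply, smul_eq_mul]
    have : c.factorization p ≤ c * N.factorization p := by nlinarith
    omega
  have h2 : (c / Npart N c).factorization p = 0 := by
    rw [Nat.factorization_div hdvd]
    simp [h1]
  have h3 : 0 < (c / Npart N c).factorization p :=
    hp.factorization_pos_of_dvd hc2 hpd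
  omega

lemma divisors_filter_coprime {N c : ℕ} (hN : 1 ≤ N) (hc : 0 < c) :
    c.divisors.filter (fun m => Nat.Coprime m N) = (c / Npart N c).divisors := by
  have hc0 : c ≠ 0 := hc.ne'
  have hdvd := Npart_dvd N c
  have hc2 : c / Npart N c ≠ 0 := by
    have := Nat.div_pos (Nat.le_of_dvd hc hdvd) (Npart_pos hc)
    omega
  have hmul : Npart N c * (c / Npart N c) = c := Nat.mul_div_cancel' hdvd
  ext m
  simp only [Finset.mem_filter, Nat.mem_divisors]
  constructor
  · rintro ⟨⟨hmc, _⟩, hcop⟩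
    refine ⟨?_, hc2⟩
    have hcop1 : Nat.Coprime m (N ^ c) := Nat.Coprime.pow_right _ hcop
    have hcop2 : Nat.Coprime m (Npart N c) :=
      Nat.Coprime.coprime_dvd_right (Nat.gcd_dvd_right c (N ^ c)) hcop1
    have : m ∣ Npart N c * (c / Npart N c) := by rw [hmul]; exact hmc
    exact (Nat.Coprime.dvd_of_dvd_mul_left hcop2 this)
  · rintro ⟨hm2, _⟩
    refine ⟨⟨hm2.trans (Nat.div_dvd_of_dvd hdvd), hc0⟩, ?_⟩
    exact Nat.Coprime.coprime_dvd_left hm2 (copart_coprime hN hc)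

lemma Npart_totient_eq {N c : ℕ} (hN : 1 ≤ N) (hc : 0 < c) :
    (Npart N c : ℤ) * (Nat.totient (c / Npart N c) : ℤ)
      = ∑ m ∈ c.divisors.filter (fun m => Nat.Coprime m N),
          ArithmeticFunction.moebius m * ((c / m : ℕ) : ℤ) := by
  have hdvd := Npart_dvd N c
  have hc2 : 0 < c / Npart N c := Nat.div_pos (Nat.le_of_dvd hc hdvd) (Npart_pos hc)
  rw [divisors_filter_coprime hN hc, phi_moebius _ hc2, Finset.mul_sum]
  refine Finset.sum_congr rfl fun m hm => ?_
  have hm2 : m ∣ c / Npart N c := (Nat.mem_divisors.mp hm).1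
  have : c / m = Npart N c * (c / Npart N c / m) := by
    rw [← Nat.mul_div_assoc _ hm2, Nat.mul_div_cancel' hdvd]
  rw [this]
  push_cast
  ring

-- reindexing divisor double sums
lemma divisor_reindex (M : ℕ) (g : ℕ → ℕ → ℂ) :
    ∑ c ∈ Icc 1 M, ∑ m ∈ c.divisors, g m (c / m)
      = ∑ m ∈ Icc 1 M, ∑ k ∈ Icc 1 (M / m), g m k := by
  rw [Finset.sum_sigma' (Icc 1 M) (fun c => c.divisors) (fun c m => g m (c / m))]
  rw [Finset.sum_sigma' (Icc 1 M) (fun m => Icc 1 (M / m)) (fun m k => g m k)]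
  refine Finset.sum_nbij' (fun x => ⟨x.2, x.1 / x.2⟩) (fun y => ⟨y.1 * y.2, y.1⟩) ?_ ?_ ?_ ?_ ?_
  · rintro ⟨c, m⟩ hx
    simp only [Finset.mem_sigma, Finset.mem_Icc, Nat.mem_divisors] at hx ⊢
    obtain ⟨⟨h1, h2⟩, hmc, hc0⟩ := hx
    have hm0 : 0 < m := Nat.pos_of_dvd_of_pos hmc (by omega)
    refine ⟨⟨hm0, le_trans (Nat.le_of_dvd (by omega) hmc) h2⟩, ?_, Nat.div_le_div_right h2⟩
    exact Nat.div_pos (Nat.le_of_dvd (by omega) hmc) hm0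
  · rintro ⟨m, k⟩ hy
    simp only [Finset.mem_sigma, Finset.mem_Icc, Nat.mem_divisors] at hy ⊢
    obtain ⟨⟨h1, h2⟩, h3, h4⟩ := hy
    have hmk : m * k ≤ M :=
      le_trans (Nat.mul_le_mul_left m h4) (Nat.mul_div_le M m)
    exact ⟨⟨Nat.mul_pos (by omega) (by omega), hmk⟩, Dvd.intro k rfl,
      Nat.mul_ne_zero (by omega) (by omega)⟩
  · rintro ⟨c, m⟩ hx
    simp only [Finset.mem_sigma, Finset.mem_Icc, Nat.mem_divisors] at hx
    obtain ⟨⟨h1, h2⟩, hmc, hc0⟩ := hx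
    simp only [Sigma.mk.inj_iff]
    exact ⟨Nat.mul_div_cancel' hmc, heq_of_eq rfl⟩
  · rintro ⟨m, k⟩ hy
    simp only [Finset.mem_sigma, Finset.mem_Icc] at hy
    obtain ⟨⟨h1, h2⟩, h3, h4⟩ := hy
    simp only [Sigma.mk.inj_iff]
    exact ⟨trivial, heq_of_eq (Nat.mul_div_cancel_left _ (by omega : 0 < m))⟩
  · rintro ⟨c, m⟩ _
    rfl



open ArithmeticFunction ArithmeticFunction.Moebius in
lemma Bsum_eq (N : ℕ) (hN : 1 ≤ N) (α X : ℝ) :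
    Bsum N α X = ∑ m ∈ Icc 1 ⌊X⌋₊,
      (if Nat.Coprime m N then ((μ m : ℤ) : ℂ) else 0) *
        ∑ k ∈ Icc 1 (⌊X⌋₊ / m), (k : ℂ) * Efn (k * ((m : ℝ) * α)) := by
  set M := ⌊X⌋₊
  have step1 : Bsum N α X = ∑ c ∈ Icc 1 M, ∑ m ∈ c.divisors,
      (if Nat.Coprime m N then ((μ m : ℤ) : ℂ) else 0) *
        (((c / m : ℕ) : ℂ) * Efn ((c / m : ℕ) * ((m : ℝ) * α))) := by
    refine Finset.sum_congr rfl fun c hc => ?_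
    have hc1 : 0 < c := (Finset.mem_Icc.mp hc).1
    have hE : Complex.exp (2 * (Real.pi : ℂ) * Complex.I * (((c : ℝ) * α : ℝ) : ℂ))
        = Efn ((c : ℝ) * α) := by rw [Efn]
    rw [hE, mul_assoc]
    have hkey : (Npart N c : ℂ) * (Nat.totient (c / Npart N c) : ℂ)
        = ∑ m ∈ c.divisors.filter (fun m => Nat.Coprime m N),
            ((μ m : ℤ) : ℂ) * ((c / m : ℕ) : ℂ) := by
      have := Npart_totient_eq hN hc1
      calc (Npart N c : ℂ) * (Nat.totient (c / Npart N c) : ℂ)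
          = (((Npart N c : ℤ) * (Nat.totient (c / Npart N c) : ℤ) : ℤ) : ℂ) := by
            push_cast; try ring
        _ = _ := by
          rw [this, Int.cast_sum]
          refine Finset.sum_congr rfl fun m _ => ?_
          rw [Int.cast_mul, Int.cast_natCast]
    rw [hkey, Finset.mul_sum, Finset.sum_filter]
    refine Finset.sum_congr rfl fun m hm => ?_
    obtain ⟨hmc, hc0⟩ := Nat.mem_divisors.mp hm
    have hm0 : 0 < m := Nat.pos_of_dvd_of_pos hmc hc1
    have hcast : (c : ℝ) * α = (c / m : ℕ) * ((m : ℝ) * α) := by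
      have : (m : ℝ) * ((c / m : ℕ) : ℝ) = (c : ℝ) := by
        exact_mod_cast congrArg (Nat.cast : ℕ → ℝ) (Nat.mul_div_cancel' hmc)
      rw [← this]; ring
    rw [hcast]
    by_cases h : Nat.Coprime m N <;> simp [h] <;> ring
  rw [step1, divisor_reindex M (fun m k =>
      (if Nat.Coprime m N then ((μ m : ℤ) : ℂ) else 0) * ((k : ℂ) * Efn (k * ((m : ℝ) * α))))]
  refine Finset.sum_congr rfl fun m hm => ?_
  rw [Finset.mul_sum]


open ArithmeticFunction ArithmeticFunction.Moebius in
theorem stmt16 (N : ℕ) (hN : 1 ≤ N) :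
    ∃ C : ℝ, 0 < C ∧ ∀ (α X : ℝ), 1 ≤ X →
      ‖Bsum N α X‖ ≤ C * X ^ 2 * ∑ j ∈ Finset.Icc 1 ⌊X⌋₊, mfun X α j := by
  refine ⟨1, one_pos, fun α X hX => ?_⟩
  have hX0 : (0:ℝ) < X := by linarith
  set M := ⌊X⌋₊ with hM
  have hMX : (M : ℝ) ≤ X := Nat.floor_le (by linarith)
  rw [Bsum_eq N hN α X]
  have key : ∀ m ∈ Icc 1 M,
      ‖(if Nat.Coprime m N then ((μ m : ℤ) : ℂ) else 0) *
        ∑ k ∈ Icc 1 (M / m), (k : ℂ) * Efn (k * ((m : ℝ) * α))‖ ≤ X ^ 2 * mfun X α m := by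
    intro m hm
    obtain ⟨hm1, hm2⟩ := Finset.mem_Icc.mp hm
    have hm0 : (0:ℝ) < (m:ℝ) := by exact_mod_cast hm1
    set n := M / m with hn
    set θ := (m : ℝ) * α with hθ
    have hnX : (n : ℝ) ≤ X / m := by
      calc (n : ℝ) ≤ (M : ℝ) / (m : ℝ) := Nat.cast_div_le
        _ ≤ X / m := by gcongr
    have hcoef : ‖if Nat.Coprime m N then ((μ m : ℤ) : ℂ) else 0‖ ≤ 1 := by
      by_cases h : Nat.Coprime m N
      · rw [if_pos h, Complex.norm_intCast]
        exact_mod_cast abs_moebius_le_one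
      · simp [h]
    have htriv : ‖∑ k ∈ Icc 1 n, (k : ℂ) * Efn (k * θ)‖ ≤ X ^ 2 * (1 / (m:ℝ) ^ 2) := by
      calc ‖∑ k ∈ Icc 1 n, (k : ℂ) * Efn (k * θ)‖ ≤ (n : ℝ) ^ 2 :=
            weighted_exp_sum_trivial θ n
        _ ≤ (X / m) ^ 2 := by gcongr
        _ = X ^ 2 * (1 / (m:ℝ) ^ 2) := by field_simp
    have hbound : ‖∑ k ∈ Icc 1 n, (k : ℂ) * Efn (k * θ)‖ ≤ X ^ 2 * mfun X α m := by
      rw [mfun]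
      by_cases h : nint ((m : ℝ) * α) = 0
      · rw [if_pos h]; exact htriv
      · rw [if_neg h]
        have hpos := nint_pos h
        have hfrac : ‖∑ k ∈ Icc 1 n, (k : ℂ) * Efn (k * θ)‖
            ≤ X ^ 2 * (1 / (X * m * nint ((m:ℝ) * α))) := by
          calc ‖∑ k ∈ Icc 1 n, (k : ℂ) * Efn (k * θ)‖
              ≤ (n : ℝ) / nint θ := weighted_exp_sum_bound h n
            _ ≤ (X / m) / nint θ := by gcongr
            _ = X ^ 2 * (1 / (X * m * nint ((m:ℝ) * α))) := by
                rw [← hθ]; field_simp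
        rw [mul_min_of_nonneg _ _ (by positivity : (0:ℝ) ≤ X ^ 2)]
        exact le_min htriv hfrac
    calc ‖(if Nat.Coprime m N then ((μ m : ℤ) : ℂ) else 0) *
          ∑ k ∈ Icc 1 n, (k : ℂ) * Efn (k * θ)‖
        = ‖if Nat.Coprime m N then ((μ m : ℤ) : ℂ) else 0‖ *
            ‖∑ k ∈ Icc 1 n, (k : ℂ) * Efn (k * θ)‖ := norm_mul _ _
      _ ≤ 1 * (X ^ 2 * mfun X α m) := by
          exact mul_le_mul hcoef hbound (by positivity) (by norm_num)
      _ = X ^ 2 * mfun X α m := one_mul _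
  calc ‖∑ m ∈ Icc 1 M, (if Nat.Coprime m N then ((μ m : ℤ) : ℂ) else 0) *
        ∑ k ∈ Icc 1 (M / m), (k : ℂ) * Efn (k * ((m : ℝ) * α))‖
      ≤ ∑ m ∈ Icc 1 M, ‖(if Nat.Coprime m N then ((μ m : ℤ) : ℂ) else 0) *
        ∑ k ∈ Icc 1 (M / m), (k : ℂ) * Efn (k * ((m : ℝ) * α))‖ := norm_sum_le _ _
    _ ≤ ∑ m ∈ Icc 1 M, X ^ 2 * mfun X α m := Finset.sum_le_sum key
    _ = 1 * X ^ 2 * ∑ j ∈ Icc 1 M, mfun X α j := by rw [← Finset.mul_sum]; ring
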